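/- For a geodesic α in a CAT(0) space, the following two thin-triangle conditions are equivalent (with possibly different constants): (i) there exists δ such that for all x ∈ X and y ∈ α, d(π_α(x), [x,y]) < δ; (ii) there exists δ such that for every geodesic triangle Δ(x,y,z) with [y,z] ⊂ α, every point w ∈ [y,z] satisfies d(w, [x,y] ∪ [x,z]) < δ. -/
import Mathlib


open Set Metric Topology
open scoped ENNReal

/-- A geodesic parameterized by arc length on a subset of `ℝ`. -/
def IsGeodesicOn {X : Type*} [MetricSpace X] (γ : ℝ → X) (I : Set ℝ) : Prop :=
  ∀ ⦃s⦄, s ∈ I → ∀ ⦃t⦄, t ∈ I → dist (γ s) (γ t) = |s - t|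

/-- A geodesic metric space: any two points are joined by a geodesic. -/
class GeodesicSpace (X : Type*) [MetricSpace X] : Prop where
  geodesic : ∀ x y : X, ∃ γ : ℝ → X, γ 0 = x ∧ γ (dist x y) = y ∧
    IsGeodesicOn γ (Set.Icc 0 (dist x y))

/-- A CAT(0) space: a geodesic metric space satisfying the CN (Bruhat–Tits) inequality. -/
class CAT0Space (X : Type*) [MetricSpace X] extends GeodesicSpace X : Prop where
  cn : ∀ x y z m : X, dist y m = dist y z / 2 → dist z m = dist y z / 2 →
    dist x m ^ 2 ≤ (dist x y ^ 2 + dist x z ^ 2) / 2 - dist y z ^ 2 / 4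

/-- A `(K,L)`-quasi-geodesic on a subset of `ℝ`. -/
def IsQuasiGeodesicOn {X : Type*} [MetricSpace X] (K L : ℝ) (γ : ℝ → X) (I : Set ℝ) : Prop :=
  ∀ s ∈ I, ∀ t ∈ I,
    |s - t| / K - L ≤ dist (γ s) (γ t) ∧ dist (γ s) (γ t) ≤ K * |s - t| + L

/-- The set `A` (e.g. the image of a (quasi-)geodesic) is Morse with gauge `M`:
every `(K,L)`-quasi-geodesic with endpoints on `A` stays in the `M K L`-neighborhood of `A`. -/
def IsMorseWith {X : Type*} [MetricSpace X] (M : ℝ → ℝ → ℝ) (A : Set X) : Prop :=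
  ∀ K L : ℝ, 1 ≤ K → 0 ≤ L → ∀ (σ : ℝ → X) (a b : ℝ), a ≤ b →
    IsQuasiGeodesicOn K L σ (Set.Icc a b) → σ a ∈ A → σ b ∈ A →
    ∀ t ∈ Set.Icc a b, Metric.infDist (σ t) A ≤ M K L

/-- `π` is a nearest-point projection onto `A`. -/
def IsProjOn {X : Type*} [MetricSpace X] (π : X → X) (A : Set X) : Prop :=
  ∀ x : X, π x ∈ A ∧ ∀ a ∈ A, dist x (π x) ≤ dist x a

/-- `A` is `D`-contracting with respect to the nearest-point projection `π`. -/
def IsContractingWith {X : Type*} [MetricSpace X] (D : ℝ) (π : X → X) (A : Set X) : Prop :=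
  IsProjOn π A ∧ ∀ x y : X, dist x y < dist x (π x) → dist (π x) (π y) < D

/-- The Hausdorff distance between `A` and `B` is at most `C`. -/
def HausdorffLE {X : Type*} [MetricSpace X] (A B : Set X) (C : ℝ) : Prop :=
  (∀ a ∈ A, ∃ b ∈ B, dist a b ≤ C) ∧ ∀ b ∈ B, ∃ a ∈ A, dist a b ≤ C

/-- A `(lam, eps)`-quasi-isometric embedding. -/
def IsQIEmbedding {X Y : Type*} [MetricSpace X] [MetricSpace Y]
    (lam eps : ℝ) (f : X → Y) : Prop :=
  ∀ s t : X, dist s t / lam - eps ≤ dist (f s) (f t) ∧ dist (f s) (f t) ≤ lam * dist s t + eps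

/-- A `(lam, eps)`-quasi-isometry: a quasi-isometric embedding with `eps`-dense image. -/
def IsQuasiIsometry {X Y : Type*} [MetricSpace X] [MetricSpace Y]
    (lam eps : ℝ) (f : X → Y) : Prop :=
  IsQIEmbedding lam eps f ∧ ∀ y : Y, ∃ x : X, dist (f x) y ≤ eps

/-- Slimness (thin triangle condition (i)) for the set `A` with projection `π`:
for every `x` and every `y ∈ A`, the projection `π x` is within `δ` of the geodesic `[x,y]`. -/
def SlimWith {X : Type*} [MetricSpace X] (δ : ℝ) (π : X → X) (A : Set X) : Prop :=
  ∀ x : X, ∀ y ∈ A, ∀ σ : ℝ → X, σ 0 = x → σ (dist x y) = y →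
    IsGeodesicOn σ (Set.Icc 0 (dist x y)) →
    Metric.infDist (π x) (σ '' Set.Icc 0 (dist x y)) < δ

/-- The lower divergence of `γ` (defined on `I ⊆ ℝ`) at scale `r`: the infimum over `t > r`
of the infimum of lengths of paths from `γ (t-r)` to `γ (t+r)` that avoid the open
`r`-ball about `γ t`. -/
noncomputable def ldiv {X : Type*} [MetricSpace X] (γ : ℝ → X) (I : Set ℝ) (r : ℝ) : ℝ≥0∞ :=
  ⨅ (t : ℝ) (_ : r < t) (_ : Set.Icc (t - r) (t + r) ⊆ I)
    (p : ℝ → X) (a : ℝ) (b : ℝ) (_ : a ≤ b) (_ : p a = γ (t - r)) (_ : p b = γ (t + r))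
    (_ : ∀ s ∈ Set.Icc a b, r ≤ dist (p s) (γ t)),
    eVariationOn p (Set.Icc a b)

/-- The direct limit topology on the union of an increasing family of subspaces. -/
def dirLimTop {R : Type*} [TopologicalSpace R] (S : ℕ → Set R) :
    TopologicalSpace ↥(⋃ n, S n) :=
  ⨆ n, TopologicalSpace.coinduced (Set.inclusion (Set.subset_iUnion S n)) inferInstance

/-- Thin triangle condition (ii): for every geodesic triangle with one side `[γ s, γ u]` on
the geodesic `γ`, every point of that side is within `δ` of the union of the other two sides. -/
def SlimTri {X : Type*} [MetricSpace X] (δ : ℝ) (γ : ℝ → X) (I : Set ℝ) : Prop :=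
  ∀ s ∈ I, ∀ u ∈ I, s ≤ u → Set.Icc s u ⊆ I →
    ∀ x : X, ∀ σ₁ σ₂ : ℝ → X,
      σ₁ 0 = x → σ₁ (dist x (γ s)) = γ s → IsGeodesicOn σ₁ (Set.Icc 0 (dist x (γ s))) →
      σ₂ 0 = x → σ₂ (dist x (γ u)) = γ u → IsGeodesicOn σ₂ (Set.Icc 0 (dist x (γ u))) →
      ∀ v ∈ Set.Icc s u,
        Metric.infDist (γ v)
          (σ₁ '' Set.Icc 0 (dist x (γ s)) ∪ σ₂ '' Set.Icc 0 (dist x (γ u))) < δ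

section aux

variable {X : Type*} [MetricSpace X] [CAT0Space X]

lemma exists_midpoint (x y : X) :
    ∃ m : X, dist x m = dist x y / 2 ∧ dist y m = dist x y / 2 := by
  obtain ⟨g, hg0, hgd, hgeo⟩ := GeodesicSpace.geodesic x y
  have hd : (0:ℝ) ≤ dist x y := dist_nonneg
  refine ⟨g (dist x y / 2), ?_, ?_⟩
  · have h := hgeo (s := 0) ⟨le_refl _, hd⟩ (t := dist x y / 2) ⟨by linarith, by linarith⟩
    rw [hg0] at h
    rw [h, abs_of_nonpos (by linarith)]; ring
  · have h := hgeo (s := dist x y) ⟨hd, le_refl _⟩ (t := dist x y / 2) ⟨by linarith, by linarith⟩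
    rw [hgd] at h
    rw [h, abs_of_nonneg (by linarith)]; ring

lemma midpt_contract (q p a m1 m2 : X)
    (h1 : dist q m1 = dist q p / 2) (h1' : dist p m1 = dist q p / 2)
    (h2 : dist q m2 = dist q a / 2) (h2' : dist a m2 = dist q a / 2) :
    dist m1 m2 ≤ dist p a / 2 := by
  have c1 := CAT0Space.cn m2 q p m1 h1 h1'
  have c2 := CAT0Space.cn p q a m2 h2 h2'
  have e1 : dist m2 q = dist q a / 2 := by rw [dist_comm]; exact h2
  have e2 : dist m2 p = dist p m2 := dist_comm _ _
  have e3 : dist m2 m1 = dist m1 m2 := dist_comm _ _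
  have e4 : dist p q = dist q p := dist_comm _ _
  rw [e3, e1, e2] at c1
  rw [e4] at c2
  have hsq : dist m1 m2 ^ 2 ≤ dist p a ^ 2 / 4 := by nlinarith [c1, c2]
  nlinarith [hsq, dist_nonneg (x := m1) (y := m2), dist_nonneg (x := p) (y := a)]

lemma midpt_convex (x1 y1 x2 y2 m1 m2 : X)
    (h1 : dist x1 m1 = dist x1 y1 / 2) (h1' : dist y1 m1 = dist x1 y1 / 2)
    (h2 : dist x2 m2 = dist x2 y2 / 2) (h2' : dist y2 m2 = dist x2 y2 / 2) :
    dist m1 m2 ≤ (dist x1 x2 + dist y1 y2) / 2 := by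
  obtain ⟨m, hm1, hm2⟩ := exists_midpoint x1 y2
  have e1 : dist m1 m ≤ dist y1 y2 / 2 := midpt_contract x1 y1 y2 m1 m h1 h1' hm1 hm2
  have e2 : dist m2 m ≤ dist x2 x1 / 2 := by
    refine midpt_contract y2 x2 x1 m2 m ?_ ?_ ?_ ?_
    · rw [dist_comm y2 x2]; exact h2'
    · rw [dist_comm x2 m2, dist_comm y2 x2]; rw [dist_comm x2 m2] at h2; exact h2
    · rw [dist_comm y2 x1]; exact hm2
    · rw [dist_comm x1 m, dist_comm y2 x1]; rw [dist_comm x1 m] at hm1; exact hm1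
  have := dist_triangle m1 m m2
  rw [dist_comm m m2] at this
  rw [dist_comm x2 x1] at e2
  linarith

lemma geodesic_cone_bound (L1 L2 : ℝ) (hL1 : 0 ≤ L1) (hL2 : 0 ≤ L2)
    (f1 f2 : ℝ → X) (h1 : IsGeodesicOn f1 (Set.Icc 0 L1))
    (h2 : IsGeodesicOn f2 (Set.Icc 0 L2)) (hq : f1 0 = f2 0) :
    ∀ lam ∈ Set.Icc (0:ℝ) 1, dist (f1 (lam * L1)) (f2 (lam * L2)) ≤ dist (f1 L1) (f2 L2) := by
  set g : ℝ → ℝ := fun lam => dist (f1 (lam * L1)) (f2 (lam * L2)) with hg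
  have mem1 : ∀ a ∈ Set.Icc (0:ℝ) 1, a * L1 ∈ Set.Icc 0 L1 := fun a ha =>
    ⟨mul_nonneg ha.1 hL1, mul_le_of_le_one_left hL1 ha.2⟩
  have mem2 : ∀ a ∈ Set.Icc (0:ℝ) 1, a * L2 ∈ Set.Icc 0 L2 := fun a ha =>
    ⟨mul_nonneg ha.1 hL2, mul_le_of_le_one_left hL2 ha.2⟩
  have hmid : ∀ a ∈ Set.Icc (0:ℝ) 1, ∀ b ∈ Set.Icc (0:ℝ) 1,
      g ((a + b) / 2) ≤ (g a + g b) / 2 := by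
    intro a ha b hb
    have hab : (a + b) / 2 ∈ Set.Icc (0:ℝ) 1 :=
      ⟨by linarith [ha.1, hb.1], by linarith [ha.2, hb.2]⟩
    refine midpt_convex (f1 (a*L1)) (f1 (b*L1)) (f2 (a*L2)) (f2 (b*L2)) _ _ ?_ ?_ ?_ ?_
    · rw [h1 (mem1 a ha) (mem1 _ hab), h1 (mem1 a ha) (mem1 b hb),
        show a*L1 - (a+b)/2*L1 = (a*L1 - b*L1)/2 by ring, abs_div, abs_two]
    · rw [h1 (mem1 b hb) (mem1 _ hab), h1 (mem1 a ha) (mem1 b hb),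
        show b*L1 - (a+b)/2*L1 = -((a*L1 - b*L1)/2) by ring, abs_neg, abs_div, abs_two]
    · rw [h2 (mem2 a ha) (mem2 _ hab), h2 (mem2 a ha) (mem2 b hb),
        show a*L2 - (a+b)/2*L2 = (a*L2 - b*L2)/2 by ring, abs_div, abs_two]
    · rw [h2 (mem2 b hb) (mem2 _ hab), h2 (mem2 a ha) (mem2 b hb),
        show b*L2 - (a+b)/2*L2 = -((a*L2 - b*L2)/2) by ring, abs_neg, abs_div, abs_two]
  have hlip : LipschitzOnWith (L1 + L2).toNNReal g (Set.Icc 0 1) := by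
    refine LipschitzOnWith.of_dist_le_mul fun a ha b hb => ?_
    have k1 : dist (f1 (a*L1)) (f1 (b*L1)) = |a*L1 - b*L1| := h1 (mem1 a ha) (mem1 b hb)
    have k2 : dist (f2 (a*L2)) (f2 (b*L2)) = |a*L2 - b*L2| := h2 (mem2 a ha) (mem2 b hb)
    have tri := dist_dist_dist_le (f1 (a*L1)) (f2 (a*L2)) (f1 (b*L1)) (f2 (b*L2))
    have hco : ((L1 + L2).toNNReal : ℝ) = L1 + L2 := Real.coe_toNNReal _ (by linarith)
    have e1 : |a*L1 - b*L1| = L1 * |a - b| := by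
      rw [show a*L1 - b*L1 = L1 * (a - b) by ring, abs_mul, abs_of_nonneg hL1]
    have e2 : |a*L2 - b*L2| = L2 * |a - b| := by
      rw [show a*L2 - b*L2 = L2 * (a - b) by ring, abs_mul, abs_of_nonneg hL2]
    have hd : dist a b = |a - b| := Real.dist_eq a b
    calc dist (g a) (g b) ≤ dist (f1 (a*L1)) (f1 (b*L1)) + dist (f2 (a*L2)) (f2 (b*L2)) := tri
      _ = (L1 + L2) * dist a b := by rw [k1, k2, e1, e2, hd]; ring
      _ = ((L1 + L2).toNNReal : ℝ) * dist a b := by rw [hco]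
  obtain ⟨c, hc, hmax⟩ := isCompact_Icc.exists_isMaxOn (nonempty_Icc.mpr zero_le_one)
    hlip.continuousOn
  have hg0 : g 0 = 0 := by simp [hg, hq]
  have hg1 : g 1 = dist (f1 L1) (f2 L2) := by simp [hg]
  have key : g c ≤ g 1 := by
    rcases le_or_gt c (1/2) with hle | hlt
    · have hb : 2 * c ∈ Set.Icc (0:ℝ) 1 := ⟨by linarith [hc.1], by linarith⟩
      have := hmid 0 ⟨le_refl _, zero_le_one⟩ (2*c) hb
      rw [show (0 + 2*c)/2 = c by ring, hg0] at this
      have h2 : g (2*c) ≤ g c := hmax hb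
      have : g c ≤ 0 := by linarith
      have := dist_nonneg (x := f1 L1) (y := f2 L2)
      linarith [hg1 ▸ this]
    · have ha : 2 * c - 1 ∈ Set.Icc (0:ℝ) 1 := ⟨by linarith, by linarith [hc.2]⟩
      have := hmid (2*c-1) ha 1 ⟨zero_le_one, le_refl _⟩
      rw [show (2*c - 1 + 1)/2 = c by ring] at this
      have h2 : g (2*c-1) ≤ g c := hmax ha
      linarith
  intro lam hlam
  calc g lam ≤ g c := hmax hlam
    _ ≤ g 1 := key
    _ = dist (f1 L1) (f2 L2) := hg1


lemma side_bound (γ : ℝ → X) (I : Set ℝ) (hγ : IsGeodesicOn γ I)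
    (s0 t v : ℝ) (hsub : Set.Icc (min s0 t) (max s0 t) ⊆ I)
    (hv : v ∈ Set.Icc (min s0 t) (max s0 t))
    (x : X) (σ : ℝ → X) (hσe : σ (dist x (γ s0)) = γ s0)
    (hσg : IsGeodesicOn σ (Set.Icc 0 (dist x (γ s0))))
    (r0 : ℝ) (hr0 : r0 ∈ Set.Icc 0 (dist x (γ s0))) :
    ∃ r ∈ Set.Icc (0:ℝ) (dist x (γ s0)), dist (γ v) (σ r) ≤ dist (γ t) (σ r0) := by
  set D := dist x (γ s0) with hD
  have hD0 : 0 ≤ D := dist_nonneg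
  have hf2g : IsGeodesicOn (fun w => σ (D - w)) (Set.Icc 0 (D - r0)) := by
    intro w hw w' hw'
    have m1 : D - w ∈ Set.Icc 0 D := ⟨by linarith [hw.2, hr0.1], by linarith [hw.1]⟩
    have m2 : D - w' ∈ Set.Icc 0 D := ⟨by linarith [hw'.2, hr0.1], by linarith [hw'.1]⟩
    have := hσg m1 m2
    simp only at this ⊢
    rw [this, show D - w - (D - w') = -(w - w') by ring, abs_neg]
  rcases le_total s0 t with hst | hst
  · rw [min_eq_left hst, max_eq_right hst] at hsub hv
    set lam := (v - s0) / (t - s0) with hlam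
    have hlam01 : lam ∈ Set.Icc (0:ℝ) 1 := by
      rcases eq_or_lt_of_le hst with rfl | h
      · have : lam = 0 := by simp [hlam]
        rw [this]; exact ⟨le_refl _, zero_le_one⟩
      · exact ⟨div_nonneg (by linarith [hv.1]) (by linarith),
          (div_le_one (by linarith)).mpr (by linarith [hv.2])⟩
    have hvL : s0 + lam * (t - s0) = v := by
      rcases eq_or_lt_of_le hst with rfl | h
      · have hv0 : v = s0 := le_antisymm hv.2 hv.1
        simp [hlam, hv0]
      · rw [hlam, div_mul_cancel₀ _ (by intro hc; rw [sub_eq_zero] at hc; linarith)]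
        ring
    have hf1g : IsGeodesicOn (fun w => γ (s0 + w)) (Set.Icc 0 (t - s0)) := by
      intro w hw w' hw'
      have m1 : s0 + w ∈ I := hsub ⟨by linarith [hw.1], by linarith [hw.2]⟩
      have m2 : s0 + w' ∈ I := hsub ⟨by linarith [hw'.1], by linarith [hw'.2]⟩
      have := hγ m1 m2
      simp only at this ⊢
      rw [this, show s0 + w - (s0 + w') = w - w' by ring]
    have hq : (fun w => γ (s0 + w)) 0 = (fun w => σ (D - w)) 0 := by
      simp only [add_zero, sub_zero]
      rw [hσe]
    have cone := geodesic_cone_bound (t - s0) (D - r0) (by linarith) (by linarith [hr0.2])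
      _ _ hf1g hf2g hq lam hlam01
    rw [hvL, show s0 + (t - s0) = t by ring, show D - (D - r0) = r0 by ring] at cone
    have h1 : 0 ≤ lam * (D - r0) := mul_nonneg hlam01.1 (by linarith [hr0.2])
    have h2 : lam * (D - r0) ≤ D - r0 := mul_le_of_le_one_left (by linarith [hr0.2]) hlam01.2
    exact ⟨D - lam * (D - r0), ⟨by linarith [hr0.1], by linarith⟩, cone⟩
  · rw [min_eq_right hst, max_eq_left hst] at hsub hv
    set lam := (s0 - v) / (s0 - t) with hlam
    have hlam01 : lam ∈ Set.Icc (0:ℝ) 1 := by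
      rcases eq_or_lt_of_le hst with rfl | h
      · have : lam = 0 := by simp [hlam]
        rw [this]; exact ⟨le_refl _, zero_le_one⟩
      · exact ⟨div_nonneg (by linarith [hv.2]) (by linarith),
          (div_le_one (by linarith)).mpr (by linarith [hv.1])⟩
    have hvL : s0 - lam * (s0 - t) = v := by
      rcases eq_or_lt_of_le hst with rfl | h
      · have hv0 : v = t := le_antisymm hv.2 hv.1
        simp [hlam, hv0]
      · rw [hlam, div_mul_cancel₀ _ (by intro hc; rw [sub_eq_zero] at hc; linarith)]
        ring
    have hf1g : IsGeodesicOn (fun w => γ (s0 - w)) (Set.Icc 0 (s0 - t)) := by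
      intro w hw w' hw'
      have m1 : s0 - w ∈ I := hsub ⟨by linarith [hw.2], by linarith [hw.1]⟩
      have m2 : s0 - w' ∈ I := hsub ⟨by linarith [hw'.2], by linarith [hw'.1]⟩
      have := hγ m1 m2
      simp only at this ⊢
      rw [this, show s0 - w - (s0 - w') = -(w - w') by ring, abs_neg]
    have hq : (fun w => γ (s0 - w)) 0 = (fun w => σ (D - w)) 0 := by
      simp only [sub_zero]
      rw [hσe]
    have cone := geodesic_cone_bound (s0 - t) (D - r0) (by linarith) (by linarith [hr0.2])
      _ _ hf1g hf2g hq lam hlam01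
    rw [hvL, show s0 - (s0 - t) = t by ring, show D - (D - r0) = r0 by ring] at cone
    have h1 : 0 ≤ lam * (D - r0) := mul_nonneg hlam01.1 (by linarith [hr0.2])
    have h2 : lam * (D - r0) ≤ D - r0 := mul_le_of_le_one_left (by linarith [hr0.2]) hlam01.2
    exact ⟨D - lam * (D - r0), ⟨by linarith [hr0.1], by linarith⟩, cone⟩

end aux

/-- for a geodesic in a CAT(0) space, the two thin triangle conditions are
equivalent (with possibly different constants). -/
theorem stmt7 {X : Type*} [MetricSpace X] [CAT0Space X]
    (γ : ℝ → X) (I : Set ℝ) (hγ : IsGeodesicOn γ I)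
    (hconv : ∀ ⦃s⦄, s ∈ I → ∀ ⦃u⦄, u ∈ I → Set.Icc s u ⊆ I)
    (π : X → X) (hπ : IsProjOn π (γ '' I)) :
    (∃ δ : ℝ, SlimWith δ π (γ '' I)) ↔ (∃ δ : ℝ, SlimTri δ γ I) := by
  constructor
  · rintro ⟨δ, hSW⟩
    refine ⟨δ, ?_⟩
    intro s hsI u huI hsu hIccI x σ₁ σ₂ hσ₁0 hσ₁e hσ₁g hσ₂0 hσ₂e hσ₂g v hv
    obtain ⟨⟨t, htI, hpt⟩, _⟩ := hπ x
    rcases le_total v t with hvt | htv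
    · have hst : s ≤ t := le_trans hv.1 hvt
      have hsub : Set.Icc (min s t) (max s t) ⊆ I := by
        rw [min_eq_left hst, max_eq_right hst]; exact hconv hsI htI
      have hvmem : v ∈ Set.Icc (min s t) (max s t) := by
        rw [min_eq_left hst, max_eq_right hst]; exact ⟨hv.1, hvt⟩
      have hsw := hSW x (γ s) ⟨s, hsI, rfl⟩ σ₁ hσ₁0 hσ₁e hσ₁g
      have hne : (σ₁ '' Set.Icc 0 (dist x (γ s))).Nonempty :=
        ⟨σ₁ 0, 0, ⟨le_refl _, dist_nonneg⟩, rfl⟩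
      obtain ⟨a, ⟨r0, hr0, rfl⟩, ha⟩ := (Metric.infDist_lt_iff hne).mp hsw
      obtain ⟨r, hr, hle⟩ := side_bound γ I hγ s t v hsub hvmem x σ₁ hσ₁e hσ₁g r0 hr0
      refine lt_of_le_of_lt (Metric.infDist_le_dist_of_mem
        ((Set.mem_union _ _ _).mpr (Or.inl ⟨r, hr, rfl⟩))) ?_
      rw [hpt] at hle
      exact lt_of_le_of_lt hle ha
    · have htu : t ≤ u := le_trans htv hv.2
      have hsub : Set.Icc (min u t) (max u t) ⊆ I := by
        rw [min_eq_right htu, max_eq_left htu]; exact hconv htI huI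
      have hvmem : v ∈ Set.Icc (min u t) (max u t) := by
        rw [min_eq_right htu, max_eq_left htu]; exact ⟨htv, hv.2⟩
      have hsw := hSW x (γ u) ⟨u, huI, rfl⟩ σ₂ hσ₂0 hσ₂e hσ₂g
      have hne : (σ₂ '' Set.Icc 0 (dist x (γ u))).Nonempty :=
        ⟨σ₂ 0, 0, ⟨le_refl _, dist_nonneg⟩, rfl⟩
      obtain ⟨a, ⟨r0, hr0, rfl⟩, ha⟩ := (Metric.infDist_lt_iff hne).mp hsw
      obtain ⟨r, hr, hle⟩ := side_bound γ I hγ u t v hsub hvmem x σ₂ hσ₂e hσ₂g r0 hr0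
      refine lt_of_le_of_lt (Metric.infDist_le_dist_of_mem
        ((Set.mem_union _ _ _).mpr (Or.inr ⟨r, hr, rfl⟩))) ?_
      rw [hpt] at hle
      exact lt_of_le_of_lt hle ha
  · rintro ⟨δ, hST⟩
    refine ⟨3 * δ, ?_⟩
    rintro x y ⟨u, huI, rfl⟩ σ hσ0 hσe hσg
    obtain ⟨⟨t, htI, hpt⟩, hp_min⟩ := hπ x
    rw [← hpt]
    rw [← hpt] at hp_min
    clear hpt
    -- δ is positive
    have hIuu : Set.Icc u u ⊆ I := by
      intro w hw
      have : w = u := le_antisymm hw.2 hw.1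
      rwa [this]
    have hδpos : 0 < δ := lt_of_le_of_lt Metric.infDist_nonneg
      (hST u huI u huI le_rfl hIuu x σ σ hσ0 hσe hσg hσ0 hσe hσg u ⟨le_rfl, le_rfl⟩)
    obtain ⟨τ, hτ0, hτe, hτg⟩ := GeodesicSpace.geodesic x (γ t)
    -- key estimate for points on τ
    have hkey : ∀ r ∈ Set.Icc (0:ℝ) (dist x (γ t)), ∀ w ∈ I,
        dist (γ w) (γ t) ≤ 2 * dist (γ w) (τ r) := by
      intro r hr w hw
      have h1 : dist (τ r) (γ t) = dist x (γ t) - r := by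
        have h := hτg hr ⟨dist_nonneg, le_refl _⟩
        rw [hτe] at h
        rw [h, abs_of_nonpos (by linarith [hr.2])]; ring
      have h2 : dist x (τ r) = r := by
        have h := hτg (Set.left_mem_Icc.mpr dist_nonneg) hr
        rw [hτ0] at h
        rw [h, abs_of_nonpos (by linarith [hr.1])]; ring
      have h3 : dist x (γ t) ≤ dist x (γ w) := hp_min _ ⟨w, hw, rfl⟩
      have h4 : dist x (γ w) ≤ dist x (τ r) + dist (τ r) (γ w) := dist_triangle _ _ _
      have h5 : dist (γ w) (γ t) ≤ dist (γ w) (τ r) + dist (τ r) (γ t) := dist_triangle _ _ _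
      have h6 : dist (τ r) (γ w) = dist (γ w) (τ r) := dist_comm _ _
      linarith
    have hd0 : dist (γ t) (γ u) = |t - u| := hγ htI huI
    rcases le_or_gt (dist (γ t) (γ u)) (2*δ) with hsmall | hbig
    · refine lt_of_le_of_lt (Metric.infDist_le_dist_of_mem
        ⟨dist x (γ u), ⟨dist_nonneg, le_refl _⟩, rfl⟩) ?_
      rw [hσe]
      linarith
    · rcases le_total t u with htu | hut
      · have habs : |t - u| = u - t := by
          rw [abs_of_nonpos (by linarith)]; ring
        rw [hd0, habs] at hbig
        have hIcc : Set.Icc t u ⊆ I := hconv htI huI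
        have hvI : t + 2*δ ∈ Set.Icc t u := ⟨by linarith, by linarith⟩
        have happ := hST t htI u huI htu hIcc x τ σ hτ0 hτe hτg hσ0 hσe hσg (t + 2*δ) hvI
        have hne : (τ '' Set.Icc 0 (dist x (γ t)) ∪ σ '' Set.Icc 0 (dist x (γ u))).Nonempty :=
          ⟨τ 0, Or.inl ⟨0, ⟨le_refl _, dist_nonneg⟩, rfl⟩⟩
        obtain ⟨qq, hq_mem, hq_dist⟩ := (Metric.infDist_lt_iff hne).mp happ
        have hdvt : dist (γ (t + 2*δ)) (γ t) = 2*δ := by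
          rw [hγ (hIcc hvI) htI, show t + 2*δ - t = 2*δ by ring,
            abs_of_nonneg (by linarith)]
        rcases hq_mem with ⟨r, hr, rfl⟩ | ⟨r, hr, rfl⟩
        · exfalso
          have := hkey r hr (t + 2*δ) (hIcc hvI)
          rw [hdvt] at this
          linarith
        · refine lt_of_le_of_lt (Metric.infDist_le_dist_of_mem ⟨r, hr, rfl⟩) ?_
          have htri : dist (γ t) (σ r) ≤ dist (γ t) (γ (t + 2*δ)) + dist (γ (t + 2*δ)) (σ r) :=
            dist_triangle _ _ _
          rw [dist_comm (γ t) (γ (t + 2*δ)), hdvt] at htri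
          linarith
      · have habs : |t - u| = t - u := abs_of_nonneg (by linarith)
        rw [hd0, habs] at hbig
        have hIcc : Set.Icc u t ⊆ I := hconv huI htI
        have hvI : t - 2*δ ∈ Set.Icc u t := ⟨by linarith, by linarith⟩
        have happ := hST u huI t htI hut hIcc x σ τ hσ0 hσe hσg hτ0 hτe hτg (t - 2*δ) hvI
        have hne : (σ '' Set.Icc 0 (dist x (γ u)) ∪ τ '' Set.Icc 0 (dist x (γ t))).Nonempty :=
          ⟨τ 0, Or.inr ⟨0, ⟨le_refl _, dist_nonneg⟩, rfl⟩⟩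
        obtain ⟨qq, hq_mem, hq_dist⟩ := (Metric.infDist_lt_iff hne).mp happ
        have hdvt : dist (γ (t - 2*δ)) (γ t) = 2*δ := by
          rw [hγ (hIcc hvI) htI, show t - 2*δ - t = -(2*δ) by ring, abs_neg,
            abs_of_nonneg (by linarith)]
        rcases hq_mem with ⟨r, hr, rfl⟩ | ⟨r, hr, rfl⟩
        · refine lt_of_le_of_lt (Metric.infDist_le_dist_of_mem ⟨r, hr, rfl⟩) ?_
          have htri : dist (γ t) (σ r) ≤ dist (γ t) (γ (t - 2*δ)) + dist (γ (t - 2*δ)) (σ r) :=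
            dist_triangle _ _ _
          rw [dist_comm (γ t) (γ (t - 2*δ)), hdvt] at htri
          linarith
        · exfalso
          have := hkey r hr (t - 2*δ) (hIcc hvI)
          rw [hdvt] at this
          linarith
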